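/- arXiv:2211.04807 — 6 statements merged into one kernel-verified Lean document; each statement's English description precedes it below -/
import Mathlib

section
/- Let x ∈ X and suppose S : X → U satisfies B(S(x̃), w̃; x̃) = L(w̃) for all w̃ ∈ W and all x̃ ∈ X, that u := S(x) is the unique element of U with B(u, w̃; x) = L(w̃) for all w̃ ∈ W, and that S is Fréchet differentiable at x with derivative S'(x) : X → U. Assume the qualification conditions: there is c > 0 such that for every w' ∈ W, sup over (h_x,h_u) with ‖(h_x,h_u)‖ = 1 of B_x(u,w';h_x) + B_u(h_u,w';x) is at least c‖w'‖; and whenever B_u(ũ,w';x) = 0 for all ũ ∈ U, then B_x(u,w';x) = 0. Then for every z ∈ U and every w ∈ W satisfying the weak adjoint equation B_u(ũ, w; x) = −⟨z, ũ⟩ for all ũ ∈ U, the Hilbert-space adjoint of the derivative satisfies S'(x)* z = ∇̄_xB(u, w). -/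
local notation "⟪" x ", " y "⟫" => @inner ℝ _ _ x y

/-! Differentiating the state equation `B(S x', w̃; x') = L w̃` at `x` gives the linearized
equation `B_x(u, w̃; h) + B_u(S'(x) h, w̃; x) = 0`. Testing the weak adjoint equation with
`ũ = S'(x) h` then yields `⟪S'(x)* z, h⟫ = ⟪z, S'(x) h⟫ = -B_u(S'(x) h, w; x) = B_x(u, w; h)`,
which is the Riesz representation of `B_x(u, w; ·)` evaluated at `h`. -/

theorem ContinuousLinearMap.adjoint_apply_eq_toDual_symm
    {E F : Type*} [NormedAddCommGroup E] [InnerProductSpace ℝ E] [CompleteSpace E]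
    [NormedAddCommGroup F] [InnerProductSpace ℝ F] [CompleteSpace F]
    (A : E →L[ℝ] F) (z : F) (φ : E →L[ℝ] ℝ) (hφ : ∀ h, ⟪z, A h⟫ = φ h) :
    ContinuousLinearMap.adjoint A z = (InnerProductSpace.toDual ℝ E).symm φ := by
  refine ext_inner_right ℝ fun h => ?_
  rw [ContinuousLinearMap.adjoint_inner_left, InnerProductSpace.toDual_symm_apply, hφ]

open ContinuousLinearMap in
theorem linearized_state_equation
    {X U W : Type*}
    [NormedAddCommGroup X] [NormedSpace ℝ X] [NormedAddCommGroup U] [NormedSpace ℝ U]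
    [NormedAddCommGroup W] [NormedSpace ℝ W]
    (b₀ : W →L[ℝ] ℝ) (b₁ : U →L[ℝ] W →L[ℝ] ℝ)
    (b₂ : W →L[ℝ] X →L[ℝ] ℝ) (b₃ : U →L[ℝ] W →L[ℝ] X →L[ℝ] ℝ)
    (S : X → U) (x : X) (S' : X →L[ℝ] U) (hS' : HasFDerivAt S S' x) (w : W) (a : ℝ)
    (hS : ∀ x', b₀ w + b₁ (S x') w + b₂ w x' + b₃ (S x') w x' = a) (h : X) :
    b₂ w h + b₃ (S x) w h + (b₁ (S' h) w + b₃ (S' h) w x) = 0 := by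
  have hderiv := (((hasFDerivAt_const (b₀ w) x).add ((b₁.flip w).hasFDerivAt.comp x hS')).add
    (b₂ w).hasFDerivAt).add ((b₃.flip w).hasFDerivAt_of_bilinear hS' (hasFDerivAt_id x))
  have hconst : HasFDerivAt (fun x' => b₀ w + b₁ (S x') w + b₂ w x' + b₃ (S x') w x')
      (0 : X →L[ℝ] ℝ) x := by
    simpa only [hS] using hasFDerivAt_const a x
  have hzero := congrArg (· h) (hderiv.unique hconst)
  simp only [add_apply, zero_apply, comp_apply, flip_apply, precompR_apply, precompL_apply,
    compL_apply, comp_id, id_eq, zero_add] at hzero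
  linarith

theorem adjoint_of_solution_operator_derivative_general
    {X U W : Type*}
    [NormedAddCommGroup X] [InnerProductSpace ℝ X] [CompleteSpace X]
    [NormedAddCommGroup U] [InnerProductSpace ℝ U] [CompleteSpace U]
    [NormedAddCommGroup W] [InnerProductSpace ℝ W]
    (L : W →L[ℝ] ℝ)
    (b₀ : W →L[ℝ] ℝ) (b₁ : U →L[ℝ] W →L[ℝ] ℝ)
    (b₂ : W →L[ℝ] X →L[ℝ] ℝ) (b₃ : U →L[ℝ] W →L[ℝ] X →L[ℝ] ℝ)
    -- B and its partial parts
    (Bf Bu : U → W → X → ℝ)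
    (hBf : ∀ u w x, Bf u w x = b₀ w + b₁ u w + b₂ w x + b₃ u w x)
    (hBu : ∀ u w x, Bu u w x = b₁ u w + b₃ u w x)
    -- the solution operator S and the point x
    (S : X → U) (x : X)
    (hS : ∀ (x' : X) (wt : W), Bf (S x') wt x' = L wt)
    (S' : X →L[ℝ] U) (hS' : HasFDerivAt S S' x) :
    ∀ (z : U) (w : W), (∀ ut : U, Bu ut w x = -⟪z, ut⟫) →
      ContinuousLinearMap.adjoint S' z
        = (InnerProductSpace.toDual ℝ X).symm (b₂ w + b₃ (S x) w) := by
  intro z w hw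
  refine S'.adjoint_apply_eq_toDual_symm z _ fun h => ?_
  have hlin := linearized_state_equation b₀ b₁ b₂ b₃ S x S' hS' w (L w)
    (fun x' => (hBf _ _ _).symm.trans (hS x' w)) h
  have hadj := hw (S' h)
  rw [hBu] at hadj
  simp only [add_apply]
  linarith

/-- Adjoint of the derivative of the PDE solution operator in terms of the
solution of the weak adjoint PDE (Corollary 2.6). -/
theorem adjoint_of_solution_operator_derivative
    {X U W : Type*}
    [NormedAddCommGroup X] [InnerProductSpace ℝ X] [CompleteSpace X]
    [NormedAddCommGroup U] [InnerProductSpace ℝ U] [CompleteSpace U]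
    [NormedAddCommGroup W] [InnerProductSpace ℝ W] [CompleteSpace W]
    (L : W →L[ℝ] ℝ)
    (b₀ : W →L[ℝ] ℝ) (b₁ : U →L[ℝ] W →L[ℝ] ℝ)
    (b₂ : W →L[ℝ] X →L[ℝ] ℝ) (b₃ : U →L[ℝ] W →L[ℝ] X →L[ℝ] ℝ)
    -- B and its partial parts
    (Bf Bx Bu : U → W → X → ℝ)
    (hBf : ∀ u w x, Bf u w x = b₀ w + b₁ u w + b₂ w x + b₃ u w x)
    (hBx : ∀ u w x, Bx u w x = b₂ w x + b₃ u w x)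
    (hBu : ∀ u w x, Bu u w x = b₁ u w + b₃ u w x)
    -- the solution operator S and the point x
    (S : X → U) (x : X)
    (hS : ∀ (x' : X) (wt : W), Bf (S x') wt x' = L wt)
    (huniq : ∀ u' : U, (∀ wt : W, Bf u' wt x = L wt) → u' = S x)
    (S' : X →L[ℝ] U) (hS' : HasFDerivAt S S' x)
    -- qualification conditions
    (c : ℝ) (hc : 0 < c)
    (hcq1 : ∀ w' : W, c * ‖w'‖ ≤
      sSup ((fun h : X × U => Bx (S x) w' h.1 + Bu h.2 w' x) ''
        {h : X × U | ‖h‖ = 1}))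
    (hcq2 : ∀ w' : W, (∀ ut : U, Bu ut w' x = 0) → Bx (S x) w' x = 0) :
    ∀ (z : U) (w : W), (∀ ut : U, Bu ut w x = -⟪z, ut⟫) →
      ContinuousLinearMap.adjoint S' z
        = (InnerProductSpace.toDual ℝ X).symm (b₂ w + b₃ (S x) w) :=
  adjoint_of_solution_operator_derivative_general L b₀ b₁ b₂ b₃ Bf Bu hBf hBu S x hS S' hS'
end

section
/- Let τ, σ > 0, φ, ψ > 0, γ̃ ≥ 0, and κ ∈ (0,1) satisfy η := φτ = ψσ and κ ≥ τσ‖K‖²/(1 + 2γ̃σ). Set ψ⁺ := ψ(1 + 2γ̃σ) and ε := 1 − τσ‖K‖²/(κ(1 + 2γ̃σ)). Then ε ≥ 0, and for all x ∈ X and y ∈ Y: φ‖x‖² + ψ⁺‖y‖² − 2η⟨Kx, y⟩ ≥ φ(1 − κ)‖x‖² + ψ⁺ε‖y‖² ≥ 0. -/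
local notation "⟪" x ", " y "⟫" => @inner ℝ _ _ x y

theorem ContinuousLinearMap.two_mul_inner_apply_le
    {X Y : Type*} [NormedAddCommGroup X] [InnerProductSpace ℝ X]
    [NormedAddCommGroup Y] [InnerProductSpace ℝ Y]
    (K : X →L[ℝ] Y) (x : X) (y : Y) (η : ℝ) {c : ℝ} (hc : 0 < c) :
    2 * η * ⟪K x, y⟫ ≤ c * ‖x‖ ^ 2 + η ^ 2 * ‖K‖ ^ 2 / c * ‖y‖ ^ 2 := by
  have h_inner : |⟪K x, y⟫| ≤ ‖K‖ * ‖x‖ * ‖y‖ :=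
    (abs_real_inner_le_norm _ _).trans (by gcongr; exact K.le_opNorm x)
  calc 2 * η * ⟪K x, y⟫
      ≤ 2 * (|η| * |⟪K x, y⟫|) := by
        rw [mul_assoc, ← abs_mul]; gcongr; exact le_abs_self _
    _ ≤ 2 * (|η| * (‖K‖ * ‖x‖ * ‖y‖)) := by gcongr
    _ = 2 * ‖x‖ * (|η| * ‖K‖ * ‖y‖) := by ring
    _ ≤ c * ‖x‖ ^ 2 + c⁻¹ * (|η| * ‖K‖ * ‖y‖) ^ 2 := two_mul_le_add_mul_sq hc
    _ = c * ‖x‖ ^ 2 + η ^ 2 * ‖K‖ ^ 2 / c * ‖y‖ ^ 2 := by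
        rw [mul_pow, mul_pow, sq_abs]; ring

theorem zm_lower_bound_general
    {X Y : Type*}
    [NormedAddCommGroup X] [InnerProductSpace ℝ X]
    [NormedAddCommGroup Y] [InnerProductSpace ℝ Y]
    (K : X →L[ℝ] Y) (τ σ φ ψ γt κ η : ℝ)
    (hσ : 0 < σ) (hφ : 0 < φ) (hψ : 0 < ψ) (hγt : 0 ≤ γt)
    (hκ0 : 0 < κ) (hκ1 : κ < 1)
    (hη : η = φ * τ) (hη' : φ * τ = ψ * σ)
    (hκ : κ ≥ τ * σ * ‖K‖ ^ 2 / (1 + 2 * γt * σ)) :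
    (0 : ℝ) ≤ 1 - τ * σ * ‖K‖ ^ 2 / (κ * (1 + 2 * γt * σ)) ∧
    ∀ (x : X) (y : Y),
      φ * (1 - κ) * ‖x‖ ^ 2
          + ψ * (1 + 2 * γt * σ) * (1 - τ * σ * ‖K‖ ^ 2 / (κ * (1 + 2 * γt * σ)))
            * ‖y‖ ^ 2
        ≤ φ * ‖x‖ ^ 2 + ψ * (1 + 2 * γt * σ) * ‖y‖ ^ 2 - 2 * η * ⟪K x, y⟫ ∧
      (0 : ℝ) ≤ φ * (1 - κ) * ‖x‖ ^ 2
          + ψ * (1 + 2 * γt * σ) * (1 - τ * σ * ‖K‖ ^ 2 / (κ * (1 + 2 * γt * σ)))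
            * ‖y‖ ^ 2 := by
  set D := 1 + 2 * γt * σ
  have hD : 0 < D := by positivity
  have hε : 0 ≤ 1 - τ * σ * ‖K‖ ^ 2 / (κ * D) := by
    rw [sub_nonneg, mul_comm κ, ← div_div]
    exact (div_le_one hκ0).2 hκ
  -- `η² = (φτ)(ψσ)` turns the Young remainder into exactly the `ψ⁺(1 - ε)` part.
  have h_remainder : η ^ 2 * ‖K‖ ^ 2 / (φ * κ) = ψ * D * (τ * σ * ‖K‖ ^ 2 / (κ * D)) := by
    rw [show η ^ 2 = φ * τ * (ψ * σ) by rw [hη, ← hη']; ring]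
    field_simp
  refine ⟨hε, fun x y => ⟨?_, ?_⟩⟩
  · have h_young := K.two_mul_inner_apply_le x y η (mul_pos hφ hκ0)
    rw [h_remainder] at h_young
    linarith
  · have h_one_sub_κ : 0 ≤ 1 - κ := by linarith
    positivity

/-- Lower bound for the tested preconditioning operator `Z_k M_k`: with
`η = φτ = ψσ`, `ψ⁺ = ψ(1 + 2γ̃σ)` and `ε = 1 - τσ‖K‖²/(κ(1 + 2γ̃σ))`, one has
`ε ≥ 0` and `φ‖x‖² + ψ⁺‖y‖² - 2η⟪Kx, y⟫ ≥ φ(1-κ)‖x‖² + ψ⁺ε‖y‖² ≥ 0`. -/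
theorem zm_lower_bound
    {X Y : Type*}
    [NormedAddCommGroup X] [InnerProductSpace ℝ X]
    [NormedAddCommGroup Y] [InnerProductSpace ℝ Y]
    (K : X →L[ℝ] Y) (τ σ φ ψ γt κ η : ℝ)
    (hτ : 0 < τ) (hσ : 0 < σ) (hφ : 0 < φ) (hψ : 0 < ψ) (hγt : 0 ≤ γt)
    (hκ0 : 0 < κ) (hκ1 : κ < 1)
    (hη : η = φ * τ) (hη' : φ * τ = ψ * σ)
    (hκ : κ ≥ τ * σ * ‖K‖ ^ 2 / (1 + 2 * γt * σ)) :
    (0 : ℝ) ≤ 1 - τ * σ * ‖K‖ ^ 2 / (κ * (1 + 2 * γt * σ)) ∧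
    ∀ (x : X) (y : Y),
      φ * (1 - κ) * ‖x‖ ^ 2
          + ψ * (1 + 2 * γt * σ) * (1 - τ * σ * ‖K‖ ^ 2 / (κ * (1 + 2 * γt * σ)))
            * ‖y‖ ^ 2
        ≤ φ * ‖x‖ ^ 2 + ψ * (1 + 2 * γt * σ) * ‖y‖ ^ 2 - 2 * η * ⟪K x, y⟫ ∧
      (0 : ℝ) ≤ φ * (1 - κ) * ‖x‖ ^ 2
          + ψ * (1 + 2 * γt * σ) * (1 - τ * σ * ‖K‖ ^ 2 / (κ * (1 + 2 * γt * σ)))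
            * ‖y‖ ^ 2 :=
  zm_lower_bound_general K τ σ φ ψ γt κ η hσ hφ hψ hγt hκ0 hκ1 hη hη' hκ
end

section
/- Fix k and suppose: subgradients p_F ∈ ∂F(x^{k+1}) and p_G ∈ ∂G*(y^{k+1}); the splitting inequalities ‖u^k − ū‖² ≥ γ_B‖u^{k+1} − ū‖² − π_u‖x^k − x̄‖² and ‖w^k − w̄‖² ≥ γ_B‖w^{k+1} − w̄‖² − C_Q‖u^{k+1} − ū‖² − π_w‖x^k − x̄‖²; positive parameters η_k, η_{k+1}, λ_k, λ_{k+1}, θ_k, θ_{k+1}, ε_u, ε_w, μ and parameters γ̃_F ∈ [0, γ_F], γ̃_{G*} ∈ [0, γ_{G*}] satisfying: γ_F ≥ γ̃_F + ε_u + ε_w + (λ_{k+1}π_u + θ_{k+1}π_w)/η_k; γ_{G*} ≥ γ̃_{G*}; γ_B ≥ λ_{k+1}/λ_k + (θ_k/λ_k)·C_Q + η_k·S(w̄)/(4ε_w λ_k) + C_x·μ·η_k/(2λ_k); and γ_B ≥ θ_{k+1}/θ_k + η_k·S(ū)/(4ε_u θ_k) + C_x·η_k/(2μ θ_k). Then η_k⟨p_F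 + ∇̄_xB(u^{k+1}, w^{k+1}) + K*y^{k+1}, x^{k+1} − x̄⟩ + η_{k+1}⟨p_G − Kx^{k+1}, y^{k+1} − ȳ⟩ ≥ η_k γ̃_F‖x^{k+1} − x̄‖² + (η_k − η_{k+1})⟨K(x^{k+1} − x̄), y^{k+1} − ȳ⟩ + η_{k+1} γ̃_{G*}‖y^{k+1} − ȳ‖² + (λ_{k+1}π_u + θ_{k+1}π_w)‖x^{k+1} − x̄‖² − (λ_kπ_u + θ_kπ_w)‖x^k − x̄‖² + λ_{k+1}‖u^{k+1} − ū‖² − λ_k‖u^k − ū‖² + θ_{k+1}‖w^{k+1} − w̄‖² − θ_k‖w^k − w̄‖². -/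
local notation "⟪" x ", " y "⟫" => @inner ℝ _ _ x y

/-- `F` is proper: nowhere `⊥` and somewhere finite. -/
def ERealProper {Z : Type*} (F : Z → EReal) : Prop :=
  (∀ z, F z ≠ ⊥) ∧ (∃ z, F z ≠ ⊤)

/-- `F` is `γ`-strongly convex. -/
def ERealStronglyConvex {Z : Type*} [NormedAddCommGroup Z] [InnerProductSpace ℝ Z]
    (γ : ℝ) (F : Z → EReal) : Prop :=
  ∀ x y : Z, ∀ a b : ℝ, 0 ≤ a → 0 ≤ b → a + b = 1 →
    F (a • x + b • y) + ((γ / 2 * (a * b) * ‖x - y‖ ^ 2 : ℝ) : EReal)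
      ≤ (a : EReal) * F x + (b : EReal) * F y

/-- The (convex) subdifferential of `F : Z → EReal` at `z₀` (set of Riesz
representatives of subgradients). -/
def ERealSubdiff {Z : Type*} [NormedAddCommGroup Z] [InnerProductSpace ℝ Z]
    (F : Z → EReal) (z₀ : Z) : Set Z :=
  {p | ∀ z : Z, F z₀ + ((⟪p, z - z₀⟫ : ℝ) : EReal) ≤ F z}

/-- Riesz representation `∇̄_x B(u,w)` of `x ↦ B_x(u,w;x) = b₂(w,x) + b₃(u,w,x)`. -/
noncomputable def gradxB {U W X : Type*}
    [NormedAddCommGroup U] [InnerProductSpace ℝ U]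
    [NormedAddCommGroup W] [InnerProductSpace ℝ W]
    [NormedAddCommGroup X] [InnerProductSpace ℝ X] [CompleteSpace X]
    (b₂ : W →L[ℝ] X →L[ℝ] ℝ) (b₃ : U →L[ℝ] W →L[ℝ] X →L[ℝ] ℝ)
    (u : U) (w : W) : X :=
  (InnerProductSpace.toDual ℝ X).symm (b₂ w + b₃ u w)

/-!
Strong convexity makes `∂F` and `∂G*` strongly monotone; tested against the fixed-point
inclusions this produces the `γ_F` and `γ_{G*}` terms, and the adjoint pairs the `K`-terms into
`(η_k - η_{k+1}) ⟪K(x^{k+1} - x̄), y^{k+1} - ȳ⟫`. By multilinearity, the change of `∇̄_x B` between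
`(ū, w̄)` and `(u^{k+1}, w^{k+1})` splits into three terms, bounded through the growth constants and
Young's inequality. The squared `u`- and `w`-errors this costs are paid for by the splitting
inequalities weighted by `λ_k` and `θ_k`, and the balance conditions say exactly that the
budget suffices.
-/

open Filter Topology

section Subdifferential

variable {Z : Type*} [NormedAddCommGroup Z] [InnerProductSpace ℝ Z] {F : Z → EReal} {x y p q : Z}
  {γ : ℝ}

theorem ne_top_of_mem_ERealSubdiff (hF : ERealProper F) (hp : p ∈ ERealSubdiff F x) : F x ≠ ⊤ :=
  let ⟨z, hz⟩ := hF.2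
  fun hx ↦ hz (top_le_iff.mp (by simpa [hx] using hp z))

-- Compare `f` along the segment `x + t (y - x)` and let `t → 0⁺`.
theorem ERealStronglyConvex.inner_add_le_of_mem_subdiff (hsc : ERealStronglyConvex γ F)
    (hp : p ∈ ERealSubdiff F x) {fx fy : ℝ} (hfx : F x = fx) (hfy : F y = fy) :
    ⟪p, y - x⟫ + γ / 2 * ‖x - y‖ ^ 2 ≤ fy - fx := by
  have hseg : ∀ t ∈ Set.Ioo (0 : ℝ) 1, ⟪p, y - x⟫ + γ / 2 * (1 - t) * ‖x - y‖ ^ 2 ≤ fy - fx := by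
    rintro t ⟨ht0, ht1⟩
    have hsub := hp ((1 - t) • x + t • y)
    have hconv := hsc x y (1 - t) t (by linarith) ht0.le (by ring)
    rw [show (1 - t) • x + t • y - x = t • (y - x) by module, real_inner_smul_right, hfx] at hsub
    rw [hfx, hfy] at hconv
    have h : fx + t * ⟪p, y - x⟫ + γ / 2 * ((1 - t) * t) * ‖x - y‖ ^ 2 ≤ (1 - t) * fx + t * fy := by
      exact_mod_cast (add_le_add hsub le_rfl).trans hconv
    nlinarith
  have hlim : Tendsto (fun t : ℝ ↦ ⟪p, y - x⟫ + γ / 2 * (1 - t) * ‖x - y‖ ^ 2) (𝓝[>] 0)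
      (𝓝 (⟪p, y - x⟫ + γ / 2 * ‖x - y‖ ^ 2)) := by
    have hcont : Continuous fun t : ℝ ↦ ⟪p, y - x⟫ + γ / 2 * (1 - t) * ‖x - y‖ ^ 2 := by
      fun_prop
    simpa using (hcont.tendsto 0).mono_left nhdsWithin_le_nhds
  exact le_of_tendsto hlim (eventually_of_mem (Ioo_mem_nhdsGT one_pos) hseg)

theorem ERealStronglyConvex.le_inner_sub_of_mem_subdiff (hF : ERealProper F)
    (hsc : ERealStronglyConvex γ F) (hp : p ∈ ERealSubdiff F x) (hq : q ∈ ERealSubdiff F y) :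
    γ * ‖x - y‖ ^ 2 ≤ ⟪p - q, x - y⟫ := by
  have hfx := (EReal.coe_toReal (ne_top_of_mem_ERealSubdiff hF hp) (hF.1 x)).symm
  have hfy := (EReal.coe_toReal (ne_top_of_mem_ERealSubdiff hF hq) (hF.1 y)).symm
  have hx := hsc.inner_add_le_of_mem_subdiff hp hfx hfy
  have hy := hsc.inner_add_le_of_mem_subdiff hq hfy hfx
  rw [← neg_sub x y, inner_neg_right] at hx
  rw [norm_sub_rev] at hy
  rw [inner_sub_left]
  linarith

end Subdifferential

theorem mul_le_mul_sq_add_sq_div {ε : ℝ} (hε : 0 < ε) (a b : ℝ) :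
    a * b ≤ ε * a ^ 2 + b ^ 2 / (4 * ε) := by
  have h := two_mul_le_add_mul_sq (a := a) (b := b) (mul_pos two_pos hε)
  field_simp at h ⊢
  linarith

section Coupling

variable {U W X : Type*} [NormedAddCommGroup U] [InnerProductSpace ℝ U]
  [NormedAddCommGroup W] [InnerProductSpace ℝ W]
  [NormedAddCommGroup X] [InnerProductSpace ℝ X] [CompleteSpace X]
  (b₂ : W →L[ℝ] X →L[ℝ] ℝ) (b₃ : U →L[ℝ] W →L[ℝ] X →L[ℝ] ℝ)

theorem inner_gradxB (u : U) (w : W) (z : X) : ⟪gradxB b₂ b₃ u w, z⟫ = b₂ w z + b₃ u w z := by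
  simp [gradxB, inner_add_left, InnerProductSpace.toDual_symm_apply]

theorem inner_gradxB_sub (u ub : U) (w wb : W) (d : X) :
    ⟪gradxB b₂ b₃ u w - gradxB b₂ b₃ ub wb, d⟫
      = (b₂ (w - wb) d + b₃ ub (w - wb) d) + b₃ (u - ub) wb d + b₃ (u - ub) (w - wb) d := by
  simp only [inner_sub_left, inner_gradxB, map_sub, sub_apply]
  ring

theorem neg_le_inner_gradxB_sub {Su Sw Cx : ℝ} (hSu : 0 ≤ Su) (hSw : 0 ≤ Sw) (hCx : 0 ≤ Cx)
    {ub : U} {wb : W} {d : X}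
    (hgrow_u : ∀ u : U, b₃ u wb d ≤ √Sw * ‖u‖ * ‖d‖)
    (hgrow_w : ∀ w : W, b₂ w d + b₃ ub w d ≤ √Su * ‖w‖ * ‖d‖)
    (hgrow_uw : ∀ (u : U) (w : W), b₃ u w d ≤ Cx * ‖u‖ * ‖w‖)
    {εu εw μ : ℝ} (hεu : 0 < εu) (hεw : 0 < εw) (hμ : 0 < μ) (u : U) (w : W) :
    -((εu + εw) * ‖d‖ ^ 2 + (Sw / (4 * εw) + Cx * μ / 2) * ‖u - ub‖ ^ 2
        + (Su / (4 * εu) + Cx / (2 * μ)) * ‖w - wb‖ ^ 2)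
      ≤ ⟪gradxB b₂ b₃ u w - gradxB b₂ b₃ ub wb, d⟫ := by
  have hu := hgrow_u (-(u - ub))
  have hw := hgrow_w (-(w - wb))
  have huw := hgrow_uw (-(u - ub)) (w - wb)
  simp only [map_neg, neg_apply, norm_neg] at hu hw huw
  have young_u := mul_le_mul_sq_add_sq_div hεw ‖d‖ (√Sw * ‖u - ub‖)
  have young_w := mul_le_mul_sq_add_sq_div hεu ‖d‖ (√Su * ‖w - wb‖)
  have young_uw := mul_le_mul_of_nonneg_left
    (mul_le_mul_sq_add_sq_div (half_pos hμ) ‖u - ub‖ ‖w - wb‖) hCx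
  rw [mul_pow, Real.sq_sqrt hSw] at young_u
  rw [mul_pow, Real.sq_sqrt hSu] at young_w
  rw [inner_gradxB_sub]
  linear_combination hu + hw + huw + young_u + young_w + young_uw

end Coupling

theorem weighted_splitting_le {γB CQ πu πw lam lam' θ θ' cu cw u u' w w' x : ℝ}
    (hlam : 0 ≤ lam) (hθ : 0 ≤ θ) (hu' : 0 ≤ u') (hw' : 0 ≤ w')
    (hsplit_u : u ≥ γB * u' - πu * x) (hsplit_w : w ≥ γB * w' - CQ * u' - πw * x)
    (hbal_u : lam' + θ * CQ + cu ≤ γB * lam) (hbal_w : θ' + cw ≤ γB * θ) :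
    (lam' + cu) * u' + (θ' + cw) * w' ≤ lam * u + θ * w + (lam * πu + θ * πw) * x := by
  linarith [mul_le_mul_of_nonneg_left hsplit_u hlam, mul_le_mul_of_nonneg_left hsplit_w hθ,
    mul_le_mul_of_nonneg_right hbal_u hu', mul_le_mul_of_nonneg_right hbal_w hw']

theorem Hk_three_point_estimate_general
    {X Y U W : Type*}
    [NormedAddCommGroup X] [InnerProductSpace ℝ X] [CompleteSpace X]
    [NormedAddCommGroup Y] [InnerProductSpace ℝ Y] [CompleteSpace Y]
    [NormedAddCommGroup U] [InnerProductSpace ℝ U]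
    [NormedAddCommGroup W] [InnerProductSpace ℝ W]
    (K : X →L[ℝ] Y)
    (F : X → EReal) (Gs : Y → EReal) (γF γGs : ℝ)
    (hFp : ERealProper F) (hGsp : ERealProper Gs)
    (hFsc : ERealStronglyConvex γF F) (hGssc : ERealStronglyConvex γGs Gs)
    (b₂ : W →L[ℝ] X →L[ℝ] ℝ) (b₃ : U →L[ℝ] W →L[ℝ] X →L[ℝ] ℝ)
    -- the fixed point v̄ = (ū, w̄, x̄, ȳ)
    (ub : U) (wb : W) (xb : X) (yb : Y)
    (hfix1 : -gradxB b₂ b₃ ub wb - ContinuousLinearMap.adjoint K yb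
        ∈ ERealSubdiff F xb)
    (hfix2 : K xb ∈ ERealSubdiff Gs yb)
    -- the iterates
    (uk uk1 : U) (wk wk1 : W) (xk xk1 : X) (yk1 : Y)
    -- growth constants
    (Su Sw Cx : ℝ) (hSu : 0 ≤ Su) (hSw : 0 ≤ Sw) (hCx : 0 ≤ Cx)
    (hgrow1 : ∀ u : U, b₃ u wb (xk1 - xb) ≤ Real.sqrt Sw * ‖u‖ * ‖xk1 - xb‖)
    (hgrow2 : ∀ w : W,
      b₂ w (xk1 - xb) + b₃ ub w (xk1 - xb) ≤ Real.sqrt Su * ‖w‖ * ‖xk1 - xb‖)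
    (hgrow3 : ∀ (u : U) (w : W), b₃ u w (xk1 - xb) ≤ Cx * ‖u‖ * ‖w‖)
    -- splitting constants and inequalities
    (γB CQ πu πw : ℝ)
    (hsplit1 : ‖uk - ub‖ ^ 2 ≥ γB * ‖uk1 - ub‖ ^ 2 - πu * ‖xk - xb‖ ^ 2)
    (hsplit2 : ‖wk - wb‖ ^ 2 ≥ γB * ‖wk1 - wb‖ ^ 2 - CQ * ‖uk1 - ub‖ ^ 2
        - πw * ‖xk - xb‖ ^ 2)
    -- subgradients
    (pF : X) (hpF : pF ∈ ERealSubdiff F xk1)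
    (pG : Y) (hpG : pG ∈ ERealSubdiff Gs yk1)
    -- parameters and balance conditions
    (ηk ηk1 lamk lamk1 θk θk1 εu εw μ γtF γtGs : ℝ)
    (hηk : 0 < ηk) (hηk1 : 0 < ηk1)
    (hlamk : 0 < lamk) (hθk : 0 < θk)
    (hεu : 0 < εu) (hεw : 0 < εw) (hμ : 0 < μ)
    (hbal1 : γF ≥ γtF + εu + εw + (lamk1 * πu + θk1 * πw) / ηk)
    (hbal2 : γGs ≥ γtGs)
    (hbal3 : γB ≥ lamk1 / lamk + (θk / lamk) * CQ
        + ηk * Sw / (4 * εw * lamk) + Cx * μ * ηk / (2 * lamk))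
    (hbal4 : γB ≥ θk1 / θk + ηk * Su / (4 * εu * θk) + Cx * ηk / (2 * μ * θk)) :
    ηk * ⟪pF + gradxB b₂ b₃ uk1 wk1 + ContinuousLinearMap.adjoint K yk1, xk1 - xb⟫
        + ηk1 * ⟪pG - K xk1, yk1 - yb⟫
      ≥ ηk * γtF * ‖xk1 - xb‖ ^ 2
        + (ηk - ηk1) * ⟪K (xk1 - xb), yk1 - yb⟫
        + ηk1 * γtGs * ‖yk1 - yb‖ ^ 2
        + (lamk1 * πu + θk1 * πw) * ‖xk1 - xb‖ ^ 2
        - (lamk * πu + θk * πw) * ‖xk - xb‖ ^ 2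
        + lamk1 * ‖uk1 - ub‖ ^ 2 - lamk * ‖uk - ub‖ ^ 2
        + θk1 * ‖wk1 - wb‖ ^ 2 - θk * ‖wk - wb‖ ^ 2 := by
  have hF : γF * ‖xk1 - xb‖ ^ 2
      ≤ ⟪pF + gradxB b₂ b₃ ub wb + ContinuousLinearMap.adjoint K yb, xk1 - xb⟫ := by
    convert hFsc.le_inner_sub_of_mem_subdiff hFp hpF hfix1 using 2
    abel
  have hG := hGssc.le_inner_sub_of_mem_subdiff hGsp hpG hfix2
  have hB := neg_le_inner_gradxB_sub b₂ b₃ hSu hSw hCx hgrow1 hgrow2 hgrow3 hεu hεw hμ uk1 wk1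
  have hbal_x : ηk * (γtF + εu + εw) + (lamk1 * πu + θk1 * πw) ≤ γF * ηk :=
    (div_le_iff₀ hηk).1 (Eq.trans_le (by field_simp) hbal1)
  have hbal_u : lamk1 + θk * CQ + ηk * (Sw / (4 * εw) + Cx * μ / 2) ≤ γB * lamk :=
    (div_le_iff₀ hlamk).1 (Eq.trans_le (by ring) hbal3)
  have hbal_w : θk1 + ηk * (Su / (4 * εu) + Cx / (2 * μ)) ≤ γB * θk :=
    (div_le_iff₀ hθk).1 (Eq.trans_le (by ring) hbal4)
  have huw := weighted_splitting_le hlamk.le hθk.le (sq_nonneg ‖uk1 - ub‖) (sq_nonneg ‖wk1 - wb‖)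
    hsplit1 hsplit2 hbal_u hbal_w
  have hpair_x : ⟪pF + gradxB b₂ b₃ uk1 wk1 + ContinuousLinearMap.adjoint K yk1, xk1 - xb⟫
      = ⟪pF + gradxB b₂ b₃ ub wb + ContinuousLinearMap.adjoint K yb, xk1 - xb⟫
        + ⟪gradxB b₂ b₃ uk1 wk1 - gradxB b₂ b₃ ub wb, xk1 - xb⟫ + ⟪K (xk1 - xb), yk1 - yb⟫ := by
    rw [real_inner_comm (yk1 - yb)]
    simp only [inner_add_left, inner_sub_left, ContinuousLinearMap.adjoint_inner_left]
    ring
  have hpair_y : ⟪pG - K xk1, yk1 - yb⟫ = ⟪pG - K xb, yk1 - yb⟫ - ⟪K (xk1 - xb), yk1 - yb⟫ := by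
    rw [map_sub, inner_sub_left, inner_sub_left, inner_sub_left]
    ring
  rw [hpair_x, hpair_y]
  linarith [mul_le_mul_of_nonneg_left hF hηk.le, mul_le_mul_of_nonneg_left hB hηk.le,
    mul_le_mul_of_nonneg_left hG hηk1.le, mul_le_mul_of_nonneg_right hbal_x (sq_nonneg ‖xk1 - xb‖),
    mul_le_mul_of_nonneg_left (mul_le_mul_of_nonneg_right hbal2 (sq_nonneg ‖yk1 - yb‖)) hηk1.le]

/-- Three-point growth estimate for the operator `H_k` (Lemma 3.5). -/
theorem Hk_three_point_estimate
    {X Y U W : Type*}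
    [NormedAddCommGroup X] [InnerProductSpace ℝ X] [CompleteSpace X]
    [NormedAddCommGroup Y] [InnerProductSpace ℝ Y] [CompleteSpace Y]
    [NormedAddCommGroup U] [InnerProductSpace ℝ U] [CompleteSpace U]
    [NormedAddCommGroup W] [InnerProductSpace ℝ W] [CompleteSpace W]
    (K : X →L[ℝ] Y)
    (F : X → EReal) (Gs : Y → EReal) (γF γGs : ℝ)
    (hγF : 0 ≤ γF) (hγGs : 0 ≤ γGs)
    (hFp : ERealProper F) (hGsp : ERealProper Gs)
    (hFsc : ERealStronglyConvex γF F) (hGssc : ERealStronglyConvex γGs Gs)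
    (b₂ : W →L[ℝ] X →L[ℝ] ℝ) (b₃ : U →L[ℝ] W →L[ℝ] X →L[ℝ] ℝ)
    -- the fixed point v̄ = (ū, w̄, x̄, ȳ)
    (ub : U) (wb : W) (xb : X) (yb : Y)
    (hfix1 : -gradxB b₂ b₃ ub wb - ContinuousLinearMap.adjoint K yb
        ∈ ERealSubdiff F xb)
    (hfix2 : K xb ∈ ERealSubdiff Gs yb)
    -- the iterates
    (uk uk1 : U) (wk wk1 : W) (xk xk1 : X) (yk1 : Y)
    -- growth constants
    (Su Sw Cx : ℝ) (hSu : 0 ≤ Su) (hSw : 0 ≤ Sw) (hCx : 0 ≤ Cx)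
    (hgrow1 : ∀ u : U, b₃ u wb (xk1 - xb) ≤ Real.sqrt Sw * ‖u‖ * ‖xk1 - xb‖)
    (hgrow2 : ∀ w : W,
      b₂ w (xk1 - xb) + b₃ ub w (xk1 - xb) ≤ Real.sqrt Su * ‖w‖ * ‖xk1 - xb‖)
    (hgrow3 : ∀ (u : U) (w : W), b₃ u w (xk1 - xb) ≤ Cx * ‖u‖ * ‖w‖)
    -- splitting constants and inequalities
    (γB CQ πu πw : ℝ) (hγB : 0 < γB) (hCQ : 0 ≤ CQ) (hπu : 0 ≤ πu) (hπw : 0 ≤ πw)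
    (hsplit1 : ‖uk - ub‖ ^ 2 ≥ γB * ‖uk1 - ub‖ ^ 2 - πu * ‖xk - xb‖ ^ 2)
    (hsplit2 : ‖wk - wb‖ ^ 2 ≥ γB * ‖wk1 - wb‖ ^ 2 - CQ * ‖uk1 - ub‖ ^ 2
        - πw * ‖xk - xb‖ ^ 2)
    -- subgradients
    (pF : X) (hpF : pF ∈ ERealSubdiff F xk1)
    (pG : Y) (hpG : pG ∈ ERealSubdiff Gs yk1)
    -- parameters and balance conditions
    (ηk ηk1 lamk lamk1 θk θk1 εu εw μ γtF γtGs : ℝ)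
    (hηk : 0 < ηk) (hηk1 : 0 < ηk1)
    (hlamk : 0 < lamk) (hlamk1 : 0 < lamk1) (hθk : 0 < θk) (hθk1 : 0 < θk1)
    (hεu : 0 < εu) (hεw : 0 < εw) (hμ : 0 < μ)
    (hγtF0 : 0 ≤ γtF) (hγtF : γtF ≤ γF) (hγtGs0 : 0 ≤ γtGs) (hγtGs : γtGs ≤ γGs)
    (hbal1 : γF ≥ γtF + εu + εw + (lamk1 * πu + θk1 * πw) / ηk)
    (hbal2 : γGs ≥ γtGs)
    (hbal3 : γB ≥ lamk1 / lamk + (θk / lamk) * CQ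
        + ηk * Sw / (4 * εw * lamk) + Cx * μ * ηk / (2 * lamk))
    (hbal4 : γB ≥ θk1 / θk + ηk * Su / (4 * εu * θk) + Cx * ηk / (2 * μ * θk)) :
    ηk * ⟪pF + gradxB b₂ b₃ uk1 wk1 + ContinuousLinearMap.adjoint K yk1, xk1 - xb⟫
        + ηk1 * ⟪pG - K xk1, yk1 - yb⟫
      ≥ ηk * γtF * ‖xk1 - xb‖ ^ 2
        + (ηk - ηk1) * ⟪K (xk1 - xb), yk1 - yb⟫
        + ηk1 * γtGs * ‖yk1 - yb‖ ^ 2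
        + (lamk1 * πu + θk1 * πw) * ‖xk1 - xb‖ ^ 2
        - (lamk * πu + θk * πw) * ‖xk - xb‖ ^ 2
        + lamk1 * ‖uk1 - ub‖ ^ 2 - lamk * ‖uk - ub‖ ^ 2
        + θk1 * ‖wk1 - wb‖ ^ 2 - θk * ‖wk - wb‖ ^ 2 :=
  Hk_three_point_estimate_general K F Gs γF γGs hFp hGsp hFsc hGssc b₂ b₃ ub wb xb yb hfix1 hfix2 uk
    uk1 wk wk1 xk xk1 yk1 Su Sw Cx hSu hSw hCx hgrow1 hgrow2 hgrow3 γB CQ πu πw hsplit1 hsplit2 pF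
    hpF pG hpG ηk ηk1 lamk lamk1 θk θk1 εu εw μ γtF γtGs hηk hηk1 hlamk hθk hεu hεw hμ hbal1 hbal2
    hbal3 hbal4
end

section
/- Suppose: ‖A_x − A_{x̃}‖ ≤ L_A‖x − x̃‖ and ‖f_x − f_{x̃}‖ ≤ L_f‖x − x̃‖ for all x, x̃ ∈ D; there are α ∈ [0,1) and γ_N > 0 with ‖N_x⁻¹ ∘ M_x‖ ≤ α, ‖M_x ∘ N_x⁻¹‖ ≤ α, and γ_N·‖N_x⁻¹‖ ≤ 1 for all x ∈ D; and ∇Q is L_Q-Lipschitz. Let x̄ ∈ D, ū ∈ U, w̄ ∈ W satisfy A_{x̄}ū = b − f_{x̄} and A_{x̄}* w̄ = −∇Q(ū). Fix γ_B > 1 with α²γ_B < 1, λ ∈ (0,1), and β > 0, and set c₁ := 1 + β + α²γ_B/(λ(1 − α²γ_B)) and c₂ := (1 + β)/β + α²γ_B/((1 − λ)(1 − α²γ_B)); put π_w := c₁·γ_B·L_A²·‖w̄‖²/γ_N², C_Q := c₂·γ_B·L_Q²/γ_N², and π_u := c₁·γ_B·L_A²·‖ū‖²/γ_N² + c₂·γ_B·L_f²/γ_N².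 Then for every x ∈ D, u, u⁺ ∈ U, and w, w⁺ ∈ W satisfying the splitting updates N_x u⁺ = b − f_x − M_x u and N_x* w⁺ = −∇Q(u⁺) − M_x* w, the inequalities hold: ‖u − ū‖² ≥ γ_B‖u⁺ − ū‖² − π_u‖x − x̄‖² and ‖w − w̄‖² ≥ γ_B‖w⁺ − w̄‖² − C_Q‖u⁺ − ū‖² − π_w‖x − x̄‖². -/
/-!
Subtracting the equation for `ū` from the splitting update gives
`u⁺ - ū = N_x⁻¹ r - N_x⁻¹ M_x (u - ū)` with residual `r = (f_x̄ - f_x) - (A_x - A_x̄) ū`, so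
`‖u⁺ - ū‖ ≤ α ‖u - ū‖ + a₁ + a₂` where `a₁, a₂` are the Lipschitz perturbations scaled by
`‖N_x⁻¹‖ ≤ 1/γ_N`. The adjoint update is the same computation for `N_x*`, whose left inverse is
`(N_x⁻¹)*` and for which `‖(N_x⁻¹)* M_x*‖ = ‖M_x N_x⁻¹‖`; its residual also contains
`∇Q(ū) - ∇Q(u⁺)`. Squaring, `γ_B (α t + a₁ + a₂)² ≤ t² + γ_B c₁ a₁² + γ_B c₂ a₂²` because the
difference is an explicit sum of three squares (weighted Young inequalities with weights
`λ`, `1 - λ` and `β`).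
-/

open ContinuousLinearMap

theorem mul_sq_le_of_le_mul_add_add {α γB lam β t a₁ a₂ s : ℝ}
    (hγB : 0 ≤ γB) (hαγB : α ^ 2 * γB < 1) (hlam0 : 0 < lam) (hlam1 : lam < 1) (hβ : 0 < β)
    (hs0 : 0 ≤ s) (hs : s ≤ α * t + a₁ + a₂) :
    γB * s ^ 2 ≤ t ^ 2
      + γB * (1 + β + α ^ 2 * γB / (lam * (1 - α ^ 2 * γB))) * a₁ ^ 2
      + γB * ((1 + β) / β + α ^ 2 * γB / ((1 - lam) * (1 - α ^ 2 * γB))) * a₂ ^ 2 := by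
  have hq : 0 < 1 - α ^ 2 * γB := by linarith
  have hd₁ : 0 < lam * (1 - α ^ 2 * γB) := mul_pos hlam0 hq
  have hd₂ : 0 < (1 - lam) * (1 - α ^ 2 * γB) := mul_pos (by linarith) hq
  have hsos : t ^ 2
      + γB * (1 + β + α ^ 2 * γB / (lam * (1 - α ^ 2 * γB))) * a₁ ^ 2
      + γB * ((1 + β) / β + α ^ 2 * γB / ((1 - lam) * (1 - α ^ 2 * γB))) * a₂ ^ 2
      - γB * (α * t + a₁ + a₂) ^ 2
      = (lam * (1 - α ^ 2 * γB) * t - γB * α * a₁) ^ 2 / (lam * (1 - α ^ 2 * γB))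
        + ((1 - lam) * (1 - α ^ 2 * γB) * t - γB * α * a₂) ^ 2 / ((1 - lam) * (1 - α ^ 2 * γB))
        + γB * (β * a₁ - a₂) ^ 2 / β := by
    have hlam : 1 - lam ≠ 0 := by linarith
    have hq' : 1 - γB * α ^ 2 ≠ 0 := by linarith
    field_simp
    ring
  have hsos_nonneg : 0 ≤ (lam * (1 - α ^ 2 * γB) * t - γB * α * a₁) ^ 2 / (lam * (1 - α ^ 2 * γB))
        + ((1 - lam) * (1 - α ^ 2 * γB) * t - γB * α * a₂) ^ 2 / ((1 - lam) * (1 - α ^ 2 * γB))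
        + γB * (β * a₁ - a₂) ^ 2 / β := by positivity
  have hsq : γB * s ^ 2 ≤ γB * (α * t + a₁ + a₂) ^ 2 := by gcongr
  linarith

section Splitting

variable {𝕜 E F : Type*} [NontriviallyNormedField 𝕜]
  [NormedAddCommGroup E] [NormedSpace 𝕜 E] [NormedAddCommGroup F] [NormedSpace 𝕜 F]

theorem norm_sub_le_of_comp_eq_id {N M : E →L[𝕜] F} {R : F →L[𝕜] E}
    (hR : R.comp N = .id 𝕜 E) {r : F} {u u' u₀ : E} (h : N u' = r - M u) :
    ‖u' - u₀‖ ≤ ‖R.comp M‖ * ‖u - u₀‖ + ‖R‖ * ‖r - (N + M) u₀‖ := by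
  have hRN (v : E) : R (N v) = v := by simpa using DFunLike.congr_fun hR v
  have key : u' - u₀ = R (r - (N + M) u₀) - (R.comp M) (u - u₀) := by
    rw [← hRN u', h]
    simp only [map_sub, add_apply, map_add, comp_apply, hRN]
    abel
  rw [key]
  exact (norm_sub_le _ _).trans
    ((add_le_add (le_opNorm _ _) (le_opNorm _ _)).trans_eq (add_comm _ _))

theorem norm_sub_le_of_splitting_update (A A₀ : E →L[𝕜] F) (N : E ≃L[𝕜] F)
    {b f f₀ : F} {u u' u₀ : E}
    (hu₀ : A₀ u₀ = b - f₀) (hu' : (N : E →L[𝕜] F) u' = b - f - (A - (N : E →L[𝕜] F)) u) :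
    ‖u' - u₀‖ ≤ ‖(N.symm : F →L[𝕜] E).comp (A - (N : E →L[𝕜] F))‖ * ‖u - u₀‖
      + ‖(N.symm : F →L[𝕜] E)‖ * ‖A - A₀‖ * ‖u₀‖ + ‖(N.symm : F →L[𝕜] E)‖ * ‖f - f₀‖ := by
  have hres : b - f - ((N : E →L[𝕜] F) + (A - N)) u₀ = -(A - A₀) u₀ - (f - f₀) := by
    simp only [add_sub_cancel, sub_apply, hu₀]
    abel
  have hres_le : ‖b - f - ((N : E →L[𝕜] F) + (A - N)) u₀‖ ≤ ‖A - A₀‖ * ‖u₀‖ + ‖f - f₀‖ := by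
    rw [hres]
    exact (norm_sub_le _ _).trans (by rw [norm_neg]; gcongr; exact le_opNorm _ _)
  calc ‖u' - u₀‖
      ≤ ‖(N.symm : F →L[𝕜] E).comp (A - (N : E →L[𝕜] F))‖ * ‖u - u₀‖
        + ‖(N.symm : F →L[𝕜] E)‖ * ‖b - f - ((N : E →L[𝕜] F) + (A - N)) u₀‖ :=
      norm_sub_le_of_comp_eq_id N.coe_symm_comp_coe hu'
    _ ≤ ‖(N.symm : F →L[𝕜] E).comp (A - (N : E →L[𝕜] F))‖ * ‖u - u₀‖
        + ‖(N.symm : F →L[𝕜] E)‖ * (‖A - A₀‖ * ‖u₀‖ + ‖f - f₀‖) := by gcongr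
    _ = _ := by ring

end Splitting

section Adjoint

variable {𝕜 E F : Type*} [RCLike 𝕜]
  [NormedAddCommGroup E] [InnerProductSpace 𝕜 E] [CompleteSpace E]
  [NormedAddCommGroup F] [InnerProductSpace 𝕜 F] [CompleteSpace F]

theorem norm_sub_le_of_adjoint_splitting_update (A A₀ : E →L[𝕜] F) (N : E ≃L[𝕜] F)
    {g g₀ : E} {w w' w₀ : F}
    (hw₀ : adjoint A₀ w₀ = -g₀)
    (hw' : adjoint (N : E →L[𝕜] F) w' = -g - adjoint (A - (N : E →L[𝕜] F)) w) :
    ‖w' - w₀‖ ≤ ‖(A - (N : E →L[𝕜] F)).comp (N.symm : F →L[𝕜] E)‖ * ‖w - w₀‖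
      + ‖(N.symm : F →L[𝕜] E)‖ * ‖A - A₀‖ * ‖w₀‖ + ‖(N.symm : F →L[𝕜] E)‖ * ‖g - g₀‖ := by
  have hR : (adjoint (N.symm : F →L[𝕜] E)).comp (adjoint (N : E →L[𝕜] F)) = .id 𝕜 F := by
    rw [← adjoint_comp, N.coe_comp_coe_symm, adjoint_id]
  have hres : -g - (adjoint (N : E →L[𝕜] F) + adjoint (A - (N : E →L[𝕜] F))) w₀
      = -adjoint (A - A₀) w₀ - (g - g₀) := by
    simp only [add_sub_cancel, map_sub, sub_apply, hw₀]
    abel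
  have hres_le : ‖-g - (adjoint (N : E →L[𝕜] F) + adjoint (A - (N : E →L[𝕜] F))) w₀‖
      ≤ ‖A - A₀‖ * ‖w₀‖ + ‖g - g₀‖ := by
    rw [hres]
    refine (norm_sub_le _ _).trans ?_
    rw [norm_neg, ← LinearIsometryEquiv.norm_map adjoint (A - A₀)]
    gcongr
    exact le_opNorm _ _
  calc ‖w' - w₀‖
      ≤ ‖(adjoint (N.symm : F →L[𝕜] E)).comp (adjoint (A - (N : E →L[𝕜] F)))‖ * ‖w - w₀‖
        + ‖adjoint (N.symm : F →L[𝕜] E)‖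
          * ‖-g - (adjoint (N : E →L[𝕜] F) + adjoint (A - (N : E →L[𝕜] F))) w₀‖ :=
      norm_sub_le_of_comp_eq_id hR hw'
    _ ≤ ‖(A - (N : E →L[𝕜] F)).comp (N.symm : F →L[𝕜] E)‖ * ‖w - w₀‖
        + ‖(N.symm : F →L[𝕜] E)‖ * (‖A - A₀‖ * ‖w₀‖ + ‖g - g₀‖) := by
      rw [← adjoint_comp, LinearIsometryEquiv.norm_map, LinearIsometryEquiv.norm_map]
      gcongr
    _ = _ := by ring

end Adjoint

theorem splitting_assumption_verified_general
    {U W X : Type*}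
    [NormedAddCommGroup U] [InnerProductSpace ℝ U] [CompleteSpace U]
    [NormedAddCommGroup W] [InnerProductSpace ℝ W] [CompleteSpace W]
    [NormedAddCommGroup X]
    (D : Set X)
    (A : X → (U →L[ℝ] W)) (N : X → (U ≃L[ℝ] W)) (f : X → W) (b : W)
    (gradQ : U → U)
    (LA Lf LQ : ℝ)
    (hLA : ∀ x ∈ D, ∀ x' ∈ D, ‖A x - A x'‖ ≤ LA * ‖x - x'‖)
    (hLf : ∀ x ∈ D, ∀ x' ∈ D, ‖f x - f x'‖ ≤ Lf * ‖x - x'‖)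
    (α γN : ℝ) (hγN : 0 < γN)
    (hNM : ∀ x ∈ D,
      ‖((N x).symm : W →L[ℝ] U).comp (A x - ((N x) : U →L[ℝ] W))‖ ≤ α)
    (hMN : ∀ x ∈ D,
      ‖(A x - ((N x) : U →L[ℝ] W)).comp ((N x).symm : W →L[ℝ] U)‖ ≤ α)
    (hNinv : ∀ x ∈ D, γN * ‖((N x).symm : W →L[ℝ] U)‖ ≤ 1)
    (hLQ : ∀ u u' : U, ‖gradQ u - gradQ u'‖ ≤ LQ * ‖u - u'‖)
    (xb : X) (hxb : xb ∈ D) (ub : U) (wb : W)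
    (hub : A xb ub = b - f xb)
    (hwb : ContinuousLinearMap.adjoint (A xb) wb = -gradQ ub)
    (γB lam β : ℝ) (hγB : 1 < γB) (hαγB : α ^ 2 * γB < 1)
    (hlam0 : 0 < lam) (hlam1 : lam < 1) (hβ : 0 < β) :
    let c₁ := 1 + β + α ^ 2 * γB / (lam * (1 - α ^ 2 * γB))
    let c₂ := (1 + β) / β + α ^ 2 * γB / ((1 - lam) * (1 - α ^ 2 * γB))
    let πw := c₁ * γB * LA ^ 2 * ‖wb‖ ^ 2 / γN ^ 2
    let CQ := c₂ * γB * LQ ^ 2 / γN ^ 2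
    let πu := c₁ * γB * LA ^ 2 * ‖ub‖ ^ 2 / γN ^ 2 + c₂ * γB * Lf ^ 2 / γN ^ 2
    ∀ x ∈ D, ∀ (u u' : U) (w w' : W),
      ((N x) : U →L[ℝ] W) u' = b - f x - (A x - ((N x) : U →L[ℝ] W)) u →
      ContinuousLinearMap.adjoint (((N x)) : U →L[ℝ] W) w'
          = -gradQ u' - ContinuousLinearMap.adjoint (A x - ((N x) : U →L[ℝ] W)) w →
      ‖u - ub‖ ^ 2 ≥ γB * ‖u' - ub‖ ^ 2 - πu * ‖x - xb‖ ^ 2 ∧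
      ‖w - wb‖ ^ 2 ≥ γB * ‖w' - wb‖ ^ 2 - CQ * ‖u' - ub‖ ^ 2
          - πw * ‖x - xb‖ ^ 2 := by
  dsimp only
  intro x hx u u' w w' hu hw
  have hNx : ‖((N x).symm : W →L[ℝ] U)‖ ≤ γN⁻¹ := by
    rw [← one_div, le_div_iff₀' hγN]; exact hNinv x hx
  have hγB0 : 0 ≤ γB := by linarith
  have hu_err : ‖u' - ub‖ ≤ α * ‖u - ub‖ + γN⁻¹ * (LA * ‖x - xb‖) * ‖ub‖
      + γN⁻¹ * (Lf * ‖x - xb‖) :=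
    (norm_sub_le_of_splitting_update _ _ _ hub hu).trans (by
      gcongr
      exacts [hNM x hx, hLA x hx xb hxb, hLf x hx xb hxb])
  have hw_err : ‖w' - wb‖ ≤ α * ‖w - wb‖ + γN⁻¹ * (LA * ‖x - xb‖) * ‖wb‖
      + γN⁻¹ * (LQ * ‖u' - ub‖) :=
    (norm_sub_le_of_adjoint_splitting_update _ _ _ hwb hw).trans (by
      gcongr
      exacts [hMN x hx, hLA x hx xb hxb, hLQ u' ub])
  constructor
  · linear_combination mul_sq_le_of_le_mul_add_add hγB0 hαγB hlam0 hlam1 hβ (norm_nonneg _) hu_err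
  · linear_combination mul_sq_le_of_le_mul_add_add hγB0 hαγB hlam0 hlam1 hβ (norm_nonneg _) hw_err

/-- Verification of the splitting assumption for a splitting `A_x = N_x + M_x`
with `N_x` boundedly invertible (Jacobi/Gauss–Seidel type splittings). -/
theorem splitting_assumption_verified
    {U W X : Type*}
    [NormedAddCommGroup U] [InnerProductSpace ℝ U] [CompleteSpace U]
    [NormedAddCommGroup W] [InnerProductSpace ℝ W] [CompleteSpace W]
    [NormedAddCommGroup X] [InnerProductSpace ℝ X]
    (D : Set X)
    (A : X → (U →L[ℝ] W)) (N : X → (U ≃L[ℝ] W)) (f : X → W) (b : W)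
    (Q : U → ℝ) (gradQ : U → U) (hQ : ∀ u : U, HasGradientAt Q (gradQ u) u)
    (LA Lf LQ : ℝ)
    (hLA : ∀ x ∈ D, ∀ x' ∈ D, ‖A x - A x'‖ ≤ LA * ‖x - x'‖)
    (hLf : ∀ x ∈ D, ∀ x' ∈ D, ‖f x - f x'‖ ≤ Lf * ‖x - x'‖)
    (α γN : ℝ) (hα0 : 0 ≤ α) (hα1 : α < 1) (hγN : 0 < γN)
    (hNM : ∀ x ∈ D,
      ‖((N x).symm : W →L[ℝ] U).comp (A x - ((N x) : U →L[ℝ] W))‖ ≤ α)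
    (hMN : ∀ x ∈ D,
      ‖(A x - ((N x) : U →L[ℝ] W)).comp ((N x).symm : W →L[ℝ] U)‖ ≤ α)
    (hNinv : ∀ x ∈ D, γN * ‖((N x).symm : W →L[ℝ] U)‖ ≤ 1)
    (hLQ : ∀ u u' : U, ‖gradQ u - gradQ u'‖ ≤ LQ * ‖u - u'‖)
    (xb : X) (hxb : xb ∈ D) (ub : U) (wb : W)
    (hub : A xb ub = b - f xb)
    (hwb : ContinuousLinearMap.adjoint (A xb) wb = -gradQ ub)
    (γB lam β : ℝ) (hγB : 1 < γB) (hαγB : α ^ 2 * γB < 1)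
    (hlam0 : 0 < lam) (hlam1 : lam < 1) (hβ : 0 < β) :
    let c₁ := 1 + β + α ^ 2 * γB / (lam * (1 - α ^ 2 * γB))
    let c₂ := (1 + β) / β + α ^ 2 * γB / ((1 - lam) * (1 - α ^ 2 * γB))
    let πw := c₁ * γB * LA ^ 2 * ‖wb‖ ^ 2 / γN ^ 2
    let CQ := c₂ * γB * LQ ^ 2 / γN ^ 2
    let πu := c₁ * γB * LA ^ 2 * ‖ub‖ ^ 2 / γN ^ 2 + c₂ * γB * Lf ^ 2 / γN ^ 2
    ∀ x ∈ D, ∀ (u u' : U) (w w' : W),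
      ((N x) : U →L[ℝ] W) u' = b - f x - (A x - ((N x) : U →L[ℝ] W)) u →
      ContinuousLinearMap.adjoint (((N x)) : U →L[ℝ] W) w'
          = -gradQ u' - ContinuousLinearMap.adjoint (A x - ((N x) : U →L[ℝ] W)) w →
      ‖u - ub‖ ^ 2 ≥ γB * ‖u' - ub‖ ^ 2 - πu * ‖x - xb‖ ^ 2 ∧
      ‖w - wb‖ ^ 2 ≥ γB * ‖w' - wb‖ ^ 2 - CQ * ‖u' - ub‖ ^ 2
          - πw * ‖x - xb‖ ^ 2 :=
  splitting_assumption_verified_general D A N f b gradQ LA Lf LQ hLA hLf α γN hγN hNM hMN hNinv hLQ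
    xb hxb ub wb hub hwb γB lam β hγB hαγB hlam0 hlam1 hβ
end

section
/- Fix x, x̄ ∈ X, ū, u ∈ U, w̄, w ∈ W, and assume: B_{xu}(u', w̄; x − x̄) ≤ √S(w̄)·‖u'‖·‖x − x̄‖ for all u' ∈ U; B_x(ū, w'; x − x̄) ≤ √S(ū)·‖w'‖·‖x − x̄‖ for all w' ∈ W; and B_{xu}(u', w'; x − x̄) ≤ C_x·‖u'‖·‖w'‖ for all u' ∈ U, w' ∈ W. Then for every η ≥ 0 and ε_u, ε_w, μ > 0: η·( B_x(u, w; x − x̄) − B_x(ū, w̄; x − x̄) ) ≥ −η·( S(ū)/(4ε_u) + C_x·μ/2 )·‖w − w̄‖² − η·( S(w̄)/(4ε_w) + C_x/(2μ) )·‖u − ū‖² − η·(ε_u + ε_w)·‖x − x̄‖². -/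
private lemma amgm_sqrt (s ε a b : ℝ) (hs : 0 ≤ s) (hε : 0 < ε) :
    Real.sqrt s * a * b ≤ s / (4 * ε) * a ^ 2 + ε * b ^ 2 := by
  have hεne : ε ≠ 0 := hε.ne'
  have ht : Real.sqrt s ^ 2 = s := Real.sq_sqrt hs
  have heq : s / (4 * ε) * a ^ 2 + ε * b ^ 2 - Real.sqrt s * a * b
      = (Real.sqrt s * a - 2 * ε * b) ^ 2 / (4 * ε) := by
    field_simp; linear_combination a ^ 2 * ht.symm
  have hpos : 0 ≤ (Real.sqrt s * a - 2 * ε * b) ^ 2 / (4 * ε) := by positivity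
  linarith

private lemma amgm_mu (C μ a b : ℝ) (hC : 0 ≤ C) (hμ : 0 < μ) :
    C * a * b ≤ C * μ / 2 * a ^ 2 + C / (2 * μ) * b ^ 2 := by
  have h := sq_nonneg (μ * a - b)
  have h2 : 0 ≤ C / (2 * μ) := by positivity
  have : C * a * b ≤ C / (2 * μ) * (μ * a - b) ^ 2 + C * a * b := by nlinarith
  calc C * a * b ≤ C / (2 * μ) * (μ ^ 2 * a ^ 2 - 2 * μ * a * b + b ^ 2) + C * a * b := by
        nlinarith
    _ = C * μ / 2 * a ^ 2 + C / (2 * μ) * b ^ 2 := by field_simp; ring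

/-- Growth estimate for `B_x(u,w;x-x̄) - B_x(ū,w̄;x-x̄)`, where
`B_x(u,w;x) = b₂(w,x) + b₃(u,w,x)` and `B_{xu} = b₃`. -/
theorem Bx_growth_estimate
    {X U W : Type*}
    [NormedAddCommGroup X] [InnerProductSpace ℝ X]
    [NormedAddCommGroup U] [InnerProductSpace ℝ U]
    [NormedAddCommGroup W] [InnerProductSpace ℝ W]
    (b₂ : W →L[ℝ] X →L[ℝ] ℝ) (b₃ : U →L[ℝ] W →L[ℝ] X →L[ℝ] ℝ)
    (Su Sw Cx : ℝ) (hSu : 0 ≤ Su) (hSw : 0 ≤ Sw) (hCx : 0 ≤ Cx)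
    (x xb : X) (ub u : U) (wb w : W)
    (h1 : ∀ u' : U, b₃ u' wb (x - xb) ≤ Real.sqrt Sw * ‖u'‖ * ‖x - xb‖)
    (h2 : ∀ w' : W,
      b₂ w' (x - xb) + b₃ ub w' (x - xb) ≤ Real.sqrt Su * ‖w'‖ * ‖x - xb‖)
    (h3 : ∀ (u' : U) (w' : W), b₃ u' w' (x - xb) ≤ Cx * ‖u'‖ * ‖w'‖) :
    ∀ η εu εw μ : ℝ, 0 ≤ η → 0 < εu → 0 < εw → 0 < μ →
      η * ((b₂ w (x - xb) + b₃ u w (x - xb))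
            - (b₂ wb (x - xb) + b₃ ub wb (x - xb)))
        ≥ -(η * (Su / (4 * εu) + Cx * μ / 2) * ‖w - wb‖ ^ 2)
          - η * (Sw / (4 * εw) + Cx / (2 * μ)) * ‖u - ub‖ ^ 2
          - η * (εu + εw) * ‖x - xb‖ ^ 2 := by
  intro η εu εw μ hη hεu hεw hμ
  set z := x - xb
  -- decomposition
  have hdec : (b₂ w z + b₃ u w z) - (b₂ wb z + b₃ ub wb z)
      = (b₂ (w - wb) z + b₃ ub (w - wb) z) + b₃ (u - ub) wb z
        + b₃ (u - ub) (w - wb) z := by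
    simp only [map_sub, ContinuousLinearMap.sub_apply, ContinuousLinearMap.coe_sub',
      Pi.sub_apply]
    ring
  -- term 1 lower bound
  have t1 : -(Real.sqrt Su * ‖w - wb‖ * ‖z‖) ≤ b₂ (w - wb) z + b₃ ub (w - wb) z := by
    have := h2 (-(w - wb))
    simp only [map_neg, ContinuousLinearMap.neg_apply, norm_neg] at this
    linarith
  have t2 : -(Real.sqrt Sw * ‖u - ub‖ * ‖z‖) ≤ b₃ (u - ub) wb z := by
    have := h1 (-(u - ub))
    simp only [map_neg, ContinuousLinearMap.neg_apply, norm_neg] at this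
    linarith
  have t3 : -(Cx * ‖u - ub‖ * ‖w - wb‖) ≤ b₃ (u - ub) (w - wb) z := by
    have := h3 (-(u - ub)) (w - wb)
    simp only [map_neg, ContinuousLinearMap.neg_apply, norm_neg] at this
    linarith
  have a1 : Real.sqrt Su * ‖w - wb‖ * ‖z‖ ≤ Su / (4 * εu) * ‖w - wb‖ ^ 2 + εu * ‖z‖ ^ 2 :=
    amgm_sqrt Su εu _ _ hSu hεu
  have a2 : Real.sqrt Sw * ‖u - ub‖ * ‖z‖ ≤ Sw / (4 * εw) * ‖u - ub‖ ^ 2 + εw * ‖z‖ ^ 2 :=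
    amgm_sqrt Sw εw _ _ hSw hεw
  have a3 : Cx * ‖w - wb‖ * ‖u - ub‖
      ≤ Cx * μ / 2 * ‖w - wb‖ ^ 2 + Cx / (2 * μ) * ‖u - ub‖ ^ 2 :=
    amgm_mu Cx μ _ _ hCx hμ
  have hsum : (b₂ w z + b₃ u w z) - (b₂ wb z + b₃ ub wb z)
      ≥ -((Su / (4 * εu) + Cx * μ / 2) * ‖w - wb‖ ^ 2)
        - (Sw / (4 * εw) + Cx / (2 * μ)) * ‖u - ub‖ ^ 2
        - (εu + εw) * ‖z‖ ^ 2 := by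
    rw [hdec]; nlinarith
  nlinarith [mul_le_mul_of_nonneg_left hsum hη]
end

section
/- Fix x, x̄ ∈ X, ū, u ∈ U, w̄, w ∈ W with ‖u − ū‖ ≤ δ and ‖w − w̄‖ ≤ δ for some δ > 0, and assume: B_{xu}(u', w̄; x − x̄) ≤ √S(w̄)·‖u'‖·‖x − x̄‖ for all u' ∈ U; B_x(ū, w'; x − x̄) ≤ √S(ū)·‖w'‖·‖x − x̄‖ for all w' ∈ W; and B_{xu}(u', w'; x − x̄) ≤ C̃_x·‖x − x̄‖·‖u'‖·‖w'‖ for all u' ∈ U, w' ∈ W. Then for every η ≥ 0 and ε_u, ε_w, μ̃ > 0: η·( B_x(u, w; x − x̄) − B_x(ū, w̄; x − x̄) ) ≥ −η·( S(ū)/(4ε_u) + C̃_x²·δ²·μ̃²/(8ε_u) )·‖w − w̄‖² − η·( S(w̄)/(4ε_w) + C̃_x²·δ²/(8μ̃²·ε_w) )·‖u − ū‖² − 2η·(ε_u + ε_w)·‖x − x̄‖². -/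
private lemma young_aux {P ρ ε : ℝ} (hε : 0 < ε) : P * ρ ≤ P ^ 2 / (4 * ε) + ε * ρ ^ 2 := by
  have h : P ^ 2 / (4 * ε) + ε * ρ ^ 2 - P * ρ = (P - 2 * ε * ρ) ^ 2 / (4 * ε) := by
    field_simp; ring
  have h2 : 0 ≤ (P - 2 * ε * ρ) ^ 2 / (4 * ε) := by positivity
  linarith

private lemma scalar_bound_aux (Su Sw Cxt δ εu εw μt a b ρ : ℝ)
    (hSu : 0 ≤ Su) (hSw : 0 ≤ Sw) (hCxt : 0 ≤ Cxt) (hδ : 0 < δ)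
    (ha : 0 ≤ a) (hb : 0 ≤ b) (hρ : 0 ≤ ρ) (haδ : a ≤ δ) (hbδ : b ≤ δ)
    (hεu : 0 < εu) (hεw : 0 < εw) (hμ : 0 < μt) :
    Real.sqrt Su * a * ρ + Real.sqrt Sw * b * ρ + Cxt * ρ * b * a
      ≤ (Su / (4 * εu) + Cxt ^ 2 * δ ^ 2 * μt ^ 2 / (8 * εu)) * a ^ 2
        + (Sw / (4 * εw) + Cxt ^ 2 * δ ^ 2 / (8 * μt ^ 2 * εw)) * b ^ 2
        + 2 * (εu + εw) * ρ ^ 2 := by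
  have y1 : Real.sqrt Su * a * ρ ≤ Su * a ^ 2 / (4 * εu) + εu * ρ ^ 2 := by
    have := young_aux (P := Real.sqrt Su * a) (ρ := ρ) hεu
    have hsq : (Real.sqrt Su * a) ^ 2 = Su * a ^ 2 := by
      rw [mul_pow, Real.sq_sqrt hSu]
    rw [hsq] at this; linarith
  have y2 : Real.sqrt Sw * b * ρ ≤ Sw * b ^ 2 / (4 * εw) + εw * ρ ^ 2 := by
    have := young_aux (P := Real.sqrt Sw * b) (ρ := ρ) hεw
    have hsq : (Real.sqrt Sw * b) ^ 2 = Sw * b ^ 2 := by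
      rw [mul_pow, Real.sq_sqrt hSw]
    rw [hsq] at this; linarith
  have y3 : Cxt * δ * μt * a * ρ / 2
      ≤ Cxt ^ 2 * δ ^ 2 * μt ^ 2 / (8 * εu) * a ^ 2 + εu * ρ ^ 2 / 2 := by
    have h := young_aux (P := Cxt * δ * μt * a) (ρ := ρ) hεu
    have hsq : (Cxt * δ * μt * a) ^ 2 / (4 * εu)
        = 2 * (Cxt ^ 2 * δ ^ 2 * μt ^ 2 / (8 * εu) * a ^ 2) := by
      field_simp; ring
    rw [hsq] at h; linarith
  have y4 : Cxt * δ * b / μt * ρ / 2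
      ≤ Cxt ^ 2 * δ ^ 2 / (8 * μt ^ 2 * εw) * b ^ 2 + εw * ρ ^ 2 / 2 := by
    have h := young_aux (P := Cxt * δ * b / μt) (ρ := ρ) hεw
    have hsq : (Cxt * δ * b / μt) ^ 2 / (4 * εw)
        = 2 * (Cxt ^ 2 * δ ^ 2 / (8 * μt ^ 2 * εw) * b ^ 2) := by
      field_simp; ring
    rw [hsq] at h; linarith
  -- key AM-GM with localization
  have h0 : 2 * μt * (a * b) ≤ δ * μt ^ 2 * a + δ * b := by
    nlinarith [sq_nonneg (μt * a - b), mul_nonneg (mul_nonneg (sq_nonneg μt) ha) (sub_nonneg.2 haδ),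
      mul_nonneg hb (sub_nonneg.2 hbδ)]
  have hstep : Cxt * ρ * b * a ≤ Cxt * δ * μt * a * ρ / 2 + (Cxt * δ * b / μt) * ρ / 2 := by
    have hc : 0 ≤ Cxt * ρ / (2 * μt) := by positivity
    have := mul_le_mul_of_nonneg_left h0 hc
    have heq1 : Cxt * ρ / (2 * μt) * (2 * μt * (a * b)) = Cxt * ρ * b * a := by
      field_simp
    have heq2 : Cxt * ρ / (2 * μt) * (δ * μt ^ 2 * a + δ * b)
        = Cxt * δ * μt * a * ρ / 2 + (Cxt * δ * b / μt) * ρ / 2 := by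
      field_simp
    rw [heq1, heq2] at this; exact this
  have hpos : 0 ≤ (εu + εw) * ρ ^ 2 := by positivity
  ring_nf at y1 y2 y3 y4 hstep hpos ⊢
  linarith

/-- Localized growth estimate for `B_x(u,w;x-x̄) - B_x(ū,w̄;x-x̄)`, where
`B_x(u,w;x) = b₂(w,x) + b₃(u,w,x)`, `B_{xu} = b₃`, under the a priori bounds
`‖u - ū‖ ≤ δ`, `‖w - w̄‖ ≤ δ`. -/
theorem local_Bx_growth_estimate
    {X U W : Type*}
    [NormedAddCommGroup X] [InnerProductSpace ℝ X]
    [NormedAddCommGroup U] [InnerProductSpace ℝ U]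
    [NormedAddCommGroup W] [InnerProductSpace ℝ W]
    (b₂ : W →L[ℝ] X →L[ℝ] ℝ) (b₃ : U →L[ℝ] W →L[ℝ] X →L[ℝ] ℝ)
    (Su Sw Cxt : ℝ) (hSu : 0 ≤ Su) (hSw : 0 ≤ Sw) (hCxt : 0 ≤ Cxt)
    (x xb : X) (ub u : U) (wb w : W) (δ : ℝ) (hδ : 0 < δ)
    (hu : ‖u - ub‖ ≤ δ) (hw : ‖w - wb‖ ≤ δ)
    (h1 : ∀ u' : U, b₃ u' wb (x - xb) ≤ Real.sqrt Sw * ‖u'‖ * ‖x - xb‖)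
    (h2 : ∀ w' : W,
      b₂ w' (x - xb) + b₃ ub w' (x - xb) ≤ Real.sqrt Su * ‖w'‖ * ‖x - xb‖)
    (h3 : ∀ (u' : U) (w' : W),
      b₃ u' w' (x - xb) ≤ Cxt * ‖x - xb‖ * ‖u'‖ * ‖w'‖) :
    ∀ η εu εw μt : ℝ, 0 ≤ η → 0 < εu → 0 < εw → 0 < μt →
      η * ((b₂ w (x - xb) + b₃ u w (x - xb))
            - (b₂ wb (x - xb) + b₃ ub wb (x - xb)))
        ≥ -(η * (Su / (4 * εu) + Cxt ^ 2 * δ ^ 2 * μt ^ 2 / (8 * εu)) * ‖w - wb‖ ^ 2)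
          - η * (Sw / (4 * εw) + Cxt ^ 2 * δ ^ 2 / (8 * μt ^ 2 * εw)) * ‖u - ub‖ ^ 2
          - 2 * η * (εu + εw) * ‖x - xb‖ ^ 2 := by
  intro η εu εw μt hη hεu hεw hμ
  have key2 := h2 (-(w - wb))
  have key1 := h1 (-(u - ub))
  have key3 := h3 (-(u - ub)) (w - wb)
  simp only [map_neg, ContinuousLinearMap.neg_apply, norm_neg] at key1 key2 key3
  have hD : (b₂ w (x - xb) + b₃ u w (x - xb)) - (b₂ wb (x - xb) + b₃ ub wb (x - xb))
      = (b₂ (w - wb) (x - xb) + b₃ ub (w - wb) (x - xb))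
        + b₃ (u - ub) wb (x - xb) + b₃ (u - ub) (w - wb) (x - xb) := by
    simp only [map_sub, ContinuousLinearMap.sub_apply]
    ring
  have hscal := scalar_bound_aux Su Sw Cxt δ εu εw μt ‖w - wb‖ ‖u - ub‖ ‖x - xb‖
    hSu hSw hCxt hδ (norm_nonneg _) (norm_nonneg _) (norm_nonneg _) hw hu hεu hεw hμ
  have hmain : -((Su / (4 * εu) + Cxt ^ 2 * δ ^ 2 * μt ^ 2 / (8 * εu)) * ‖w - wb‖ ^ 2
        + (Sw / (4 * εw) + Cxt ^ 2 * δ ^ 2 / (8 * μt ^ 2 * εw)) * ‖u - ub‖ ^ 2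
        + 2 * (εu + εw) * ‖x - xb‖ ^ 2)
      ≤ (b₂ w (x - xb) + b₃ u w (x - xb)) - (b₂ wb (x - xb) + b₃ ub wb (x - xb)) := by
    rw [hD]
    linarith [key1, key2, key3, hscal]
  have hfin := mul_le_mul_of_nonneg_left hmain hη
  ring_nf at hfin ⊢
  linarith
end
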